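/- arXiv:2208.10079 — 2 statements merged into one kernel-verified Lean document; each statement's English description precedes it below -/
import Mathlib

section
/- For every 2 ≤ i ≤ m and every j with i ≤ j ≤ m, one has ℓ_{i,j} = 0. -/
/-
Write `s = ∑ a_k ℓ_k`. Since `d_i ∣ a_i`, the hypothesis says `s = (a_i / d_i) d_{i-1}`, so
`d_{j-1} ∣ d_{i-1} ∣ s` for every `j ≥ i`. Go down from `j = m`: if `ℓ` vanishes above `j`, every
other term of `s` is a multiple of `d_{j-1}`, hence `d_{j-1} ∣ a_j ℓ_j`; as `d_j = gcd(a_j, d_{j-1})`,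
this gives `d_{j-1} / d_j ∣ ℓ_j`, and the bound `ℓ_j < d_{j-1} / d_j` of `B(A_m)` leaves `ℓ_j = 0`.
-/

open Finset

/-- `dseq a i` is `gcd(a 1, …, a i)`. -/
def dseq (a : ℕ → ℕ) (i : ℕ) : ℕ := Finset.gcd (Finset.Icc 1 i) a

/-- `BAm m a ℓ` says that the tuple `(ℓ 1, …, ℓ m)` (encoded as a function on `ℕ`
supported on `[1, m]`) belongs to the set `B(A_m)`, i.e. `0 ≤ ℓ i ≤ d_{i-1}/d_i − 1`
for all `2 ≤ i ≤ m`. -/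
def BAm (m : ℕ) (a : ℕ → ℕ) (ℓ : ℕ → ℕ) : Prop :=
  (∀ j, (j < 1 ∨ m < j) → ℓ j = 0) ∧
    ∀ i, 2 ≤ i → i ≤ m → ℓ i < dseq a (i - 1) / dseq a i

/-- `Telescopic m a` says that `(a 1, …, a m)` is a telescopic sequence. -/
def Telescopic (m : ℕ) (a : ℕ → ℕ) : Prop :=
  2 ≤ m ∧ (∀ i, 1 ≤ i → i ≤ m → 2 ≤ a i) ∧ dseq a m = 1 ∧
    ∀ i, 2 ≤ i → i ≤ m → ∃ ℓ : ℕ → ℕ, (∀ j, (j < 1 ∨ i ≤ j) → ℓ j = 0) ∧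
      a i * dseq a (i - 1) = dseq a i * ∑ j ∈ Finset.Icc 1 m, ℓ j * a j

lemma Nat.div_gcd_dvd_of_dvd_mul {x y t : ℕ} (hg : 0 < Nat.gcd x y) (h : y ∣ x * t) :
    y / Nat.gcd x y ∣ t := by
  have hxy : Nat.gcd x y * (y / Nat.gcd x y) ∣ Nat.gcd x y * (x / Nat.gcd x y * t) := by
    rwa [Nat.mul_div_cancel' (Nat.gcd_dvd_right x y), ← mul_assoc,
      Nat.mul_div_cancel' (Nat.gcd_dvd_left x y)]
  exact (Nat.coprime_div_gcd_div_gcd hg).symm.dvd_of_dvd_mul_left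
    ((Nat.mul_dvd_mul_iff_left hg).mp hxy)

lemma Nat.eq_zero_of_dvd_mul_of_lt_div_gcd {x y t : ℕ} (h : y ∣ x * t)
    (ht : t < y / Nat.gcd x y) : t = 0 := by
  have hg : 0 < Nat.gcd x y := (Nat.div_pos_iff.mp (Nat.zero_lt_of_lt ht)).1
  exact Nat.eq_zero_of_dvd_of_lt (Nat.div_gcd_dvd_of_dvd_mul hg h) ht

lemma sum_Icc_eq_sum_Icc_sub_one_add {M : Type*} [AddCommMonoid M] {f : ℕ → M} {j : ℕ} (hj : 1 ≤ j) :
    ∑ k ∈ Icc 1 j, f k = ∑ k ∈ Icc 1 (j - 1), f k + f j := by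
  rw [← insert_Icc_sub_one_right_eq_Icc hj, sum_insert (by simp; omega), add_comm]

section dseq

variable {a : ℕ → ℕ}

lemma dseq_dvd {j k : ℕ} (hk : 1 ≤ k) (hkj : k ≤ j) : dseq a j ∣ a k :=
  gcd_dvd (mem_Icc.mpr ⟨hk, hkj⟩)

lemma dseq_dvd_dseq {j k : ℕ} (hkj : k ≤ j) : dseq a j ∣ dseq a k :=
  dvd_gcd fun _ hl => dseq_dvd (mem_Icc.mp hl).1 ((mem_Icc.mp hl).2.trans hkj)

lemma dseq_eq_gcd_dseq_sub_one {j : ℕ} (hj : 1 ≤ j) :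
    dseq a j = Nat.gcd (a j) (dseq a (j - 1)) := by
  rw [dseq, ← insert_Icc_sub_one_right_eq_Icc hj, gcd_insert]
  rfl

lemma dseq_dvd_sum (ℓ : ℕ → ℕ) (j : ℕ) : dseq a j ∣ ∑ k ∈ Icc 1 j, a k * ℓ k :=
  dvd_sum fun _ hk => (dseq_dvd (mem_Icc.mp hk).1 (mem_Icc.mp hk).2).mul_right _

end dseq

lemma BAm.dseq_pos {m : ℕ} {a ℓ : ℕ → ℕ} (hB : BAm m a ℓ) {j : ℕ} (hj2 : 2 ≤ j) (hjm : j ≤ m) :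
    0 < dseq a j :=
  (Nat.div_pos_iff.mp (Nat.zero_lt_of_lt (hB.2 j hj2 hjm))).1

lemma BAm.eq_zero_of_dseq_dvd_sum {m : ℕ} {a ℓ : ℕ → ℕ} (hB : BAm m a ℓ) {j : ℕ}
    (hj2 : 2 ≤ j) (hjm : j ≤ m) (hzero : ∀ k, j < k → ℓ k = 0)
    (hdvd : dseq a (j - 1) ∣ ∑ k ∈ Icc 1 m, a k * ℓ k) : ℓ j = 0 := by
  have hsum : ∑ k ∈ Icc 1 m, a k * ℓ k = ∑ k ∈ Icc 1 (j - 1), a k * ℓ k + a j * ℓ j := by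
    rw [← sum_Icc_eq_sum_Icc_sub_one_add (j := j) (by omega)]
    refine (sum_subset (Icc_subset_Icc_right hjm) fun k hk hkj => ?_).symm
    rw [hzero k (by simp only [mem_Icc] at hk hkj; omega), mul_zero]
  have hdvd_term : dseq a (j - 1) ∣ a j * ℓ j :=
    (Nat.dvd_add_right (dseq_dvd_sum ℓ (j - 1))).mp (hsum ▸ hdvd)
  have hlt : ℓ j < dseq a (j - 1) / Nat.gcd (a j) (dseq a (j - 1)) :=
    dseq_eq_gcd_dseq_sub_one (a := a) (j := j) (by omega) ▸ hB.2 j hj2 hjm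
  exact Nat.eq_zero_of_dvd_mul_of_lt_div_gcd hdvd_term hlt

theorem BAm_rep_eq_zero_of_ge_general (m : ℕ) (a : ℕ → ℕ)
    (i : ℕ) (hi2 : 2 ≤ i) (ℓ : ℕ → ℕ) (hB : BAm m a ℓ)
    (hsum : dseq a i * ∑ j ∈ Finset.Icc 1 m, a j * ℓ j = a i * dseq a (i - 1)) :
    ∀ j, i ≤ j → ℓ j = 0 := by
  have hvanish : ∀ k, m < k → ℓ k = 0 := fun k hk => hB.1 k (Or.inr hk)
  intro j
  induction j using Nat.strong_decreasing_induction with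
  | base => exact ⟨m, fun k hk _ => hvanish k hk⟩
  | step j ih =>
    intro hij
    rcases lt_or_ge m j with hmj | hjm
    · exact hvanish j hmj
    have hdvd_i : dseq a (i - 1) ∣ ∑ k ∈ Icc 1 m, a k * ℓ k := by
      refine (Nat.mul_dvd_mul_iff_left (hB.dseq_pos hi2 (hij.trans hjm))).mp ?_
      rw [hsum]
      exact mul_dvd_mul_right (dseq_dvd (k := i) (by omega) le_rfl) _
    exact hB.eq_zero_of_dseq_dvd_sum (hi2.trans hij) hjm (fun k hk => ih k hk (hij.trans hk.le))
      ((dseq_dvd_dseq (by omega)).trans hdvd_i)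

/-- If `ℓ = (ℓ_{i,1}, …, ℓ_{i,m})` is the unique element of `B(A_m)` with
`Σ_{j=1}^m a j * ℓ j = a i * d (i-1) / d i` (stated multiplied through by `d i`),
then `ℓ j = 0` for all `j ≥ i`. -/
theorem BAm_rep_eq_zero_of_ge (m : ℕ) (a : ℕ → ℕ) (hT : Telescopic m a)
    (i : ℕ) (hi2 : 2 ≤ i) (him : i ≤ m) (ℓ : ℕ → ℕ) (hB : BAm m a ℓ)
    (hsum : dseq a i * ∑ j ∈ Finset.Icc 1 m, a j * ℓ j = a i * dseq a (i - 1)) :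
    ∀ j, i ≤ j → ℓ j = 0 :=
  BAm_rep_eq_zero_of_ge_general m a i hi2 ℓ hB hsum
end

section
/- Under the hypotheses on the Laurent series x_1(t), …, x_m(t), every coefficient p_{i,k} (1 ≤ i ≤ m, k ≥ 0) belongs to ℤ[λ], the subring of ℂ generated by all the coefficients λ^{(i)}_{j_1,…,j_m} of the defining equations. -/
open Finset

/-!
Write `y_i := t^{a_i} x_i` (the `powerSeriesPart` of `x_i`), a power series with nonzero
constant term, and `n_i := d_{i-1}/d_i`. Multiplying `F_i` by `t^{a_i n_i}` gives
`y_i^{n_i} = ∏_{j<i} y_j^{ℓ_{i,j}} + t Q_i` with `Q_i` a `ℤ[λ]`-combination of monomials in the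
`y_j`, and `x^b = t` becomes `∏ y_j^{b_j⁺} = ∏ y_j^{b_j⁻}`.

In a commutative group, elements with `g_i^{n_i} = ∏_{j<i} g_j^{ℓ_{i,j}}` and `∏ g_j^{b_j} = 1`
are trivial: every `v ∈ ℤ^m` with `∑ a_j v_j = 0` has `∏ g_j^{v_j} = 1` (peel off the last index,
using `n_i ∣ v_i` because `d_i = gcd(a_i, d_{i-1})`), and `e_j + a_j b` is such a vector.
For the constant terms, in `ℂˣ`, this gives `y_j(0) = 1`. If all coefficients of the `y_j` below
degree `k` lie in `ℤ[λ]`, then `f ↦ coeff_k f mod ℤ[λ]` turns products of such series into sums,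
so the classes of the `k`-th coefficients satisfy the same relations in `ℂ ⧸ ℤ[λ]`, hence vanish.
-/

lemma Int.div_gcd_dvd_of_dvd_mul {D a : ℕ} {v : ℤ} (hd : 0 < Nat.gcd a D) (h : (D : ℤ) ∣ a * v) :
    ((D / Nat.gcd a D : ℕ) : ℤ) ∣ v := by
  have hcop := Nat.coprime_div_gcd_div_gcd hd
  obtain ⟨a', ha'⟩ := Nat.gcd_dvd_left a D
  obtain ⟨D', hD'⟩ := Nat.gcd_dvd_right a D
  generalize Nat.gcd a D = g at *
  subst ha' hD'
  simp only [Nat.mul_div_cancel_left _ hd] at hcop ⊢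
  rw [Nat.cast_mul, Nat.cast_mul, mul_assoc, mul_dvd_mul_iff_left (by positivity)] at h
  exact (Nat.isCoprime_iff_coprime.2 hcop.symm).dvd_of_dvd_mul_left h

lemma dseq_dvd_s5 (a : ℕ → ℕ) {i j : ℕ} (h1 : 1 ≤ j) (h2 : j ≤ i) : dseq a i ∣ a j :=
  Finset.gcd_dvd (Finset.mem_Icc.2 ⟨h1, h2⟩)

lemma dseq_succ (a : ℕ → ℕ) (i : ℕ) : dseq a (i + 1) = Nat.gcd (a (i + 1)) (dseq a i) := by
  rw [dseq, ← insert_Icc_right_eq_Icc_add_one (by omega), Finset.gcd_insert]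
  rfl

lemma dseq_succ_dvd (a : ℕ → ℕ) (i : ℕ) : dseq a (i + 1) ∣ dseq a i :=
  dseq_succ a i ▸ Nat.gcd_dvd_right _ _

lemma dseq_pos {a : ℕ → ℕ} (ha : 0 < a 1) {i : ℕ} (hi : 1 ≤ i) : 0 < dseq a i :=
  Nat.pos_of_ne_zero fun h => by
    have := dseq_dvd_s5 a le_rfl hi
    rw [h, zero_dvd_iff] at this
    omega

lemma dseq_div_dvd_of_sum_eq_zero {a : ℕ → ℕ} (ha : 0 < a 1) (i : ℕ) {v : ℕ → ℤ}
    (hv : ∑ j ∈ Icc 1 (i + 1), (a j : ℤ) * v j = 0) :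
    ((dseq a i / dseq a (i + 1) : ℕ) : ℤ) ∣ v (i + 1) := by
  rw [dseq_succ]
  refine Int.div_gcd_dvd_of_dvd_mul (dseq_succ a i ▸ dseq_pos ha (by omega)) ?_
  rw [sum_Icc_succ_top (by omega), add_eq_zero_iff_neg_eq] at hv
  rw [← hv]
  exact (dvd_sum fun j hj => (Int.natCast_dvd_natCast.2 (dseq_dvd_s5 a (mem_Icc.1 hj).1
    (mem_Icc.1 hj).2)).mul_right _).neg_right

def IsTelescopicWitness (m : ℕ) (a : ℕ → ℕ) (ℓ : ℕ → ℕ → ℕ) : Prop :=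
  ∀ i, 2 ≤ i → i ≤ m → ∑ j ∈ Icc 1 (i - 1), a j * ℓ i j = a i * (dseq a (i - 1) / dseq a i)

section TelescopicRelations

variable {G : Type*} [CommGroup G] {m : ℕ} {a : ℕ → ℕ} {ℓ : ℕ → ℕ → ℕ} {g : ℕ → G}

@[to_additive]
lemma prod_zpow_eq_one_of_weight_eq_zero (ha : 0 < a 1)
    (hweight : IsTelescopicWitness m a ℓ)
    (hrel : ∀ i, 2 ≤ i → i ≤ m →
      g i ^ (dseq a (i - 1) / dseq a i) = ∏ j ∈ Icc 1 (i - 1), g j ^ ℓ i j)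
    {i : ℕ} (him : i ≤ m) {v : ℕ → ℤ} (hv : ∑ j ∈ Icc 1 i, (a j : ℤ) * v j = 0) :
    ∏ j ∈ Icc 1 i, g j ^ v j = 1 := by
  induction i generalizing v with
  | zero => simp
  | succ i ih =>
    obtain ⟨q, hq⟩ := dseq_div_dvd_of_sum_eq_zero ha i hv
    set n := dseq a i / dseq a (i + 1)
    -- for `i = 0` both facts hold with `n = 0`, since `dseq a 0 = 0`
    have ⟨hweight', hrel'⟩ : ∑ j ∈ Icc 1 i, a j * ℓ (i + 1) j = a (i + 1) * n ∧
        g (i + 1) ^ n = ∏ j ∈ Icc 1 i, g j ^ ℓ (i + 1) j := by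
      rcases Nat.eq_zero_or_pos i with rfl | hi
      · simp [n, dseq]
      · simpa using And.intro (hweight (i + 1) (by omega) him) (hrel (i + 1) (by omega) him)
    calc ∏ j ∈ Icc 1 (i + 1), g j ^ v j
        = ∏ j ∈ Icc 1 i, g j ^ (v j + q * ℓ (i + 1) j) := by
          simp only [prod_Icc_succ_top (by omega : 1 ≤ i + 1), hq, zpow_add, prod_mul_distrib,
            mul_comm q, zpow_mul, zpow_natCast, hrel', prod_zpow]
      _ = 1 := ih (by omega) (by
          rw [sum_Icc_succ_top (by omega), hq] at hv
          simp only [mul_add, sum_add_distrib, mul_left_comm _ q, ← mul_sum]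
          have hw : ∑ j ∈ Icc 1 i, (a j : ℤ) * ℓ (i + 1) j = a (i + 1) * n := by
            exact_mod_cast hweight'
          rw [← hv, hw]
          ring)

@[to_additive]
theorem eq_one_of_telescopic_relations (ha : 0 < a 1)
    (hweight : IsTelescopicWitness m a ℓ)
    (hrel : ∀ i, 2 ≤ i → i ≤ m →
      g i ^ (dseq a (i - 1) / dseq a i) = ∏ j ∈ Icc 1 (i - 1), g j ^ ℓ i j)
    {b : ℕ → ℤ} (hb : ∑ j ∈ Icc 1 m, (a j : ℤ) * b j = -1)
    (hgb : ∏ j ∈ Icc 1 m, g j ^ b j = 1) {j : ℕ} (hj : j ∈ Icc 1 m) : g j = 1 := by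
  -- the vector `e_j + a_j • b` has weight zero
  have h := prod_zpow_eq_one_of_weight_eq_zero ha hweight hrel le_rfl
    (v := fun k => (if k = j then 1 else 0) + a j * b k) (by
      simp only [mul_add, sum_add_distrib, mul_ite, mul_one, mul_zero, sum_ite_eq', if_pos hj,
        mul_left_comm _ (a j : ℤ), ← mul_sum, hb]
      ring)
  simp only [zpow_add, prod_mul_distrib, mul_comm (a j : ℤ), zpow_mul, prod_zpow, hgb, one_zpow,
    mul_one] at h
  rwa [prod_eq_single_of_mem j hj fun k _ hk => by simp [hk], if_pos rfl, zpow_one] at h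

@[to_additive]
lemma prod_zpow_eq_one_of_prod_pow_toNat_eq {s : Finset ℕ} {b : ℕ → ℤ}
    (h : ∏ j ∈ s, g j ^ (b j).toNat = ∏ j ∈ s, g j ^ (-b j).toNat) :
    ∏ j ∈ s, g j ^ b j = 1 := by
  rw [prod_congr rfl fun j _ => by rw [← Int.toNat_sub_toNat_neg (b j), zpow_sub, zpow_natCast,
    zpow_natCast], prod_mul_distrib, prod_inv_distrib, h, mul_inv_cancel]

lemma eq_one_of_telescopic_relations_of_isUnit {M : Type*} [CommMonoid M] {π : ℕ → M}
    (ha : 0 < a 1)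
    (hweight : IsTelescopicWitness m a ℓ)
    (hunit : ∀ j ∈ Icc 1 m, IsUnit (π j))
    (hrel : ∀ i, 2 ≤ i → i ≤ m →
      π i ^ (dseq a (i - 1) / dseq a i) = ∏ j ∈ Icc 1 (i - 1), π j ^ ℓ i j)
    {b : ℕ → ℤ} (hb : ∑ j ∈ Icc 1 m, (a j : ℤ) * b j = -1)
    (hπb : ∏ j ∈ Icc 1 m, π j ^ (b j).toNat = ∏ j ∈ Icc 1 m, π j ^ (-b j).toNat)
    {j : ℕ} (hj : j ∈ Icc 1 m) : π j = 1 := by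
  classical
  let g : ℕ → Mˣ := fun j => if h : IsUnit (π j) then h.unit else 1
  have hg : ∀ j ∈ Icc 1 m, (g j : M) = π j := fun j hj => by simp [g, hunit j hj]
  have hprod : ∀ s ⊆ Icc 1 m, ∀ c : ℕ → ℕ, ((∏ j ∈ s, g j ^ c j : Mˣ) : M) = ∏ j ∈ s, π j ^ c j :=
    fun s hs c => by
      push_cast
      exact prod_congr rfl fun j hj => by rw [hg j (hs hj)]
  have hg1 := eq_one_of_telescopic_relations (g := g) ha hweight
    (fun i hi him => Units.ext <| by
      rw [Units.val_pow_eq_pow_val, hg i (mem_Icc.2 ⟨by omega, him⟩),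
        hprod _ (Icc_subset_Icc_right (by omega)), hrel i hi him])
    hb (prod_zpow_eq_one_of_prod_pow_toNat_eq <| Units.ext <| by
      rw [hprod _ subset_rfl, hprod _ subset_rfl, hπb]) hj
  rw [← hg j hj, hg1, Units.val_one]

end TelescopicRelations

namespace PowerSeries

variable {A : Type*} [CommRing A] (R : Subring A)

def lowCoeffSubring (k : ℕ) : Subring A⟦X⟧ where
  carrier := {f | ∀ l < k, coeff l f ∈ R}
  mul_mem' {f g} hf hg l hl := by
    rw [coeff_mul]
    exact R.sum_mem fun p hp => by
      have := mem_antidiagonal.1 hp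
      exact R.mul_mem (hf _ (by omega)) (hg _ (by omega))
  one_mem' l _ := by
    rw [coeff_one]
    split_ifs
    exacts [R.one_mem, R.zero_mem]
  add_mem' hf hg l hl := by
    rw [map_add]
    exact R.add_mem (hf l hl) (hg l hl)
  zero_mem' l _ := by
    rw [map_zero]
    exact R.zero_mem
  neg_mem' hf l hl := by
    rw [map_neg]
    exact R.neg_mem (hf l hl)

variable {R}

lemma mem_lowCoeffSubring {k : ℕ} {f : A⟦X⟧} :
    f ∈ lowCoeffSubring R k ↔ ∀ l < k, coeff l f ∈ R :=
  Iff.rfl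

lemma mem_lowCoeffSubring_succ {k : ℕ} {f : A⟦X⟧} :
    f ∈ lowCoeffSubring R (k + 1) ↔ f ∈ lowCoeffSubring R k ∧ coeff k f ∈ R := by
  simp only [mem_lowCoeffSubring, Nat.lt_succ_iff_lt_or_eq, or_imp, forall_and, forall_eq]

lemma C_mem_lowCoeffSubring {k : ℕ} {r : A} (hr : r ∈ R) : C r ∈ lowCoeffSubring R k := by
  intro l _
  rw [coeff_C]
  split_ifs
  exacts [hr, R.zero_mem]

lemma X_mem_lowCoeffSubring {k : ℕ} : X ∈ lowCoeffSubring R k := by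
  intro l _
  rw [coeff_X]
  split_ifs
  exacts [R.one_mem, R.zero_mem]

lemma coeff_X_mul_mem {k : ℕ} (hk : k ≠ 0) {f : A⟦X⟧} (hf : f ∈ lowCoeffSubring R k) :
    coeff k (X * f) ∈ R := by
  obtain ⟨k, rfl⟩ := Nat.exists_eq_succ_of_ne_zero hk
  rw [coeff_succ_X_mul]
  exact hf k k.lt_succ_self

lemma coeff_mul_mem_of_constantCoeff_eq_zero {k : ℕ} {f g : A⟦X⟧}
    (hf : f ∈ lowCoeffSubring R k) (hg : g ∈ lowCoeffSubring R k)
    (hf₀ : constantCoeff f = 0) (hg₀ : constantCoeff g = 0) : coeff k (f * g) ∈ R := by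
  rw [coeff_mul]
  refine R.sum_mem fun p hp => ?_
  have hpk := mem_antidiagonal.1 hp
  rcases Nat.eq_zero_or_pos p.1 with h1 | h1
  · rw [h1, coeff_zero_eq_constantCoeff_apply, hf₀, zero_mul]
    exact R.zero_mem
  rcases Nat.eq_zero_or_pos p.2 with h2 | h2
  · rw [h2, coeff_zero_eq_constantCoeff_apply, hg₀, mul_zero]
    exact R.zero_mem
  exact R.mul_mem (hf _ (by omega)) (hg _ (by omega))

variable (R) in
noncomputable def coeffMod (k : ℕ) : A⟦X⟧ →+ A ⧸ R.toAddSubgroup :=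
  (QuotientAddGroup.mk' _).comp (coeff k).toAddMonoidHom

lemma coeffMod_eq_zero_iff {k : ℕ} {f : A⟦X⟧} : coeffMod R k f = 0 ↔ coeff k f ∈ R :=
  QuotientAddGroup.eq_zero_iff _

lemma coeffMod_one {k : ℕ} (hk : k ≠ 0) : coeffMod R k 1 = 0 :=
  coeffMod_eq_zero_iff.2 (by rw [coeff_one, if_neg hk]; exact R.zero_mem)

lemma coeffMod_mul {k : ℕ} (hk : k ≠ 0) {f g : A⟦X⟧}
    (hf : f ∈ lowCoeffSubring R k) (hg : g ∈ lowCoeffSubring R k)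
    (hf₁ : constantCoeff f = 1) (hg₁ : constantCoeff g = 1) :
    coeffMod R k (f * g) = coeffMod R k f + coeffMod R k g := by
  have hcross : coeffMod R k ((f - 1) * (g - 1)) = 0 :=
    coeffMod_eq_zero_iff.2 <| coeff_mul_mem_of_constantCoeff_eq_zero
      (sub_mem hf (one_mem _)) (sub_mem hg (one_mem _))
      (by rw [map_sub, hf₁, map_one, sub_self]) (by rw [map_sub, hg₁, map_one, sub_self])
  have : f * g = (f - 1) * (g - 1) + f + g - 1 := by ring
  rw [this, map_sub, map_add, map_add, hcross, coeffMod_one hk, zero_add, sub_zero]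

lemma coeffMod_pow {k : ℕ} (hk : k ≠ 0) {f : A⟦X⟧} (hf : f ∈ lowCoeffSubring R k)
    (hf₁ : constantCoeff f = 1) (c : ℕ) : coeffMod R k (f ^ c) = c • coeffMod R k f := by
  induction c with
  | zero => rw [pow_zero, coeffMod_one hk, zero_nsmul]
  | succ c ih =>
    rw [pow_succ, coeffMod_mul hk (pow_mem hf c) hf (by rw [map_pow, hf₁, one_pow]) hf₁, ih,
      succ_nsmul]

lemma coeffMod_prod_pow {k : ℕ} (hk : k ≠ 0) {s : Finset ℕ} {F : ℕ → A⟦X⟧}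
    (hF : ∀ j ∈ s, F j ∈ lowCoeffSubring R k) (hF₁ : ∀ j ∈ s, constantCoeff (F j) = 1)
    (c : ℕ → ℕ) :
    coeffMod R k (∏ j ∈ s, F j ^ c j) = ∑ j ∈ s, c j • coeffMod R k (F j) := by
  classical
  induction s using Finset.induction_on with
  | empty => rw [prod_empty, sum_empty, coeffMod_one hk]
  | insert j s hj ih =>
    have hF' := fun i hi => hF i (mem_insert_of_mem hi)
    have hF₁' := fun i hi => hF₁ i (mem_insert_of_mem hi)
    rw [prod_insert hj, sum_insert hj, coeffMod_mul hk (pow_mem (hF j (mem_insert_self j s)) _)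
      (prod_mem fun i hi => pow_mem (hF' i hi) _)
      (by rw [map_pow, hF₁ j (mem_insert_self j s), one_pow])
      (by rw [map_prod]; exact prod_eq_one fun i hi => by rw [map_pow, hF₁' i hi, one_pow]),
      coeffMod_pow hk (hF j (mem_insert_self j s)) (hF₁ j (mem_insert_self j s)), ih hF' hF₁']

end PowerSeries

namespace PowerSeries

variable {A : Type*} [CommRing A] {m : ℕ} {a : ℕ → ℕ} {ℓ : ℕ → ℕ → ℕ} {b : ℕ → ℤ}
  {Y Q : ℕ → A⟦X⟧}

lemma constantCoeff_eq_one_of_telescopic_system (ha : 0 < a 1)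
    (hweight : IsTelescopicWitness m a ℓ)
    (hb : ∑ j ∈ Icc 1 m, (a j : ℤ) * b j = -1)
    (hunit : ∀ j ∈ Icc 1 m, IsUnit (constantCoeff (Y j)))
    (hrel : ∀ i, 2 ≤ i → i ≤ m →
      Y i ^ (dseq a (i - 1) / dseq a i) = ∏ j ∈ Icc 1 (i - 1), Y j ^ ℓ i j + X * Q i)
    (hprod : ∏ j ∈ Icc 1 m, Y j ^ (b j).toNat = ∏ j ∈ Icc 1 m, Y j ^ (-b j).toNat)
    {j : ℕ} (hj : j ∈ Icc 1 m) : constantCoeff (Y j) = 1 := by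
  refine eq_one_of_telescopic_relations_of_isUnit ha hweight hunit (fun i hi him => ?_) hb ?_ hj
  · simpa using congrArg constantCoeff (hrel i hi him)
  · simpa using congrArg constantCoeff hprod

lemma coeff_mem_of_telescopic_system (R : Subring A) {k : ℕ} (hk : k ≠ 0) (ha : 0 < a 1)
    (hweight : IsTelescopicWitness m a ℓ)
    (hb : ∑ j ∈ Icc 1 m, (a j : ℤ) * b j = -1)
    (hY : ∀ j ∈ Icc 1 m, Y j ∈ lowCoeffSubring R k)
    (hY₁ : ∀ j ∈ Icc 1 m, constantCoeff (Y j) = 1)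
    (hQ : ∀ i, 2 ≤ i → i ≤ m → Q i ∈ lowCoeffSubring R k)
    (hrel : ∀ i, 2 ≤ i → i ≤ m →
      Y i ^ (dseq a (i - 1) / dseq a i) = ∏ j ∈ Icc 1 (i - 1), Y j ^ ℓ i j + X * Q i)
    (hprod : ∏ j ∈ Icc 1 m, Y j ^ (b j).toNat = ∏ j ∈ Icc 1 m, Y j ^ (-b j).toNat)
    {j : ℕ} (hj : j ∈ Icc 1 m) : coeff k (Y j) ∈ R := by
  have hsub : ∀ i ≤ m, Icc 1 (i - 1) ⊆ Icc 1 m := fun i him => Icc_subset_Icc_right (by omega)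
  refine coeffMod_eq_zero_iff.1 <|
    eq_zero_of_telescopic_relations (g := fun j => coeffMod R k (Y j)) ha hweight
      (fun i hi him => ?_) hb (sum_zsmul_eq_zero_of_sum_nsmul_toNat_eq ?_) hj
  · have hi' : i ∈ Icc 1 m := mem_Icc.2 ⟨by omega, him⟩
    have h := congrArg (coeffMod R k) (hrel i hi him)
    rwa [map_add, coeffMod_eq_zero_iff.2 (coeff_X_mul_mem hk (hQ i hi him)), add_zero,
      coeffMod_pow hk (hY i hi') (hY₁ i hi'),
      coeffMod_prod_pow hk (fun j hj => hY j (hsub i him hj)) (fun j hj => hY₁ j (hsub i him hj))]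
      at h
  · have h := congrArg (coeffMod R k) hprod
    rwa [coeffMod_prod_pow hk hY hY₁, coeffMod_prod_pow hk hY hY₁] at h

theorem mem_lowCoeffSubring_of_telescopic_system (R : Subring A) (ha : 0 < a 1)
    (hweight : IsTelescopicWitness m a ℓ)
    (hb : ∑ j ∈ Icc 1 m, (a j : ℤ) * b j = -1)
    (hunit : ∀ j ∈ Icc 1 m, IsUnit (constantCoeff (Y j)))
    (hrel : ∀ i, 2 ≤ i → i ≤ m →
      Y i ^ (dseq a (i - 1) / dseq a i) = ∏ j ∈ Icc 1 (i - 1), Y j ^ ℓ i j + X * Q i)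
    (hQ : ∀ k, (∀ j ∈ Icc 1 m, Y j ∈ lowCoeffSubring R k) →
      ∀ i, 2 ≤ i → i ≤ m → Q i ∈ lowCoeffSubring R k)
    (hprod : ∏ j ∈ Icc 1 m, Y j ^ (b j).toNat = ∏ j ∈ Icc 1 m, Y j ^ (-b j).toNat) (k : ℕ) :
    ∀ j ∈ Icc 1 m, Y j ∈ lowCoeffSubring R k := by
  have hY₁ := fun j (hj : j ∈ Icc 1 m) =>
    constantCoeff_eq_one_of_telescopic_system ha hweight hb hunit hrel hprod hj
  induction k with
  | zero => exact fun j _ l hl => absurd hl l.not_lt_zero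
  | succ k ih =>
    refine fun j hj => mem_lowCoeffSubring_succ.2 ⟨ih j hj, ?_⟩
    rcases eq_or_ne k 0 with rfl | hk
    · rw [coeff_zero_eq_constantCoeff_apply, hY₁ j hj]
      exact R.one_mem
    · exact coeff_mem_of_telescopic_system R hk ha hweight hb ih hY₁ (hQ k ih) hrel hprod hj

lemma eq_zero_of_pow_eq_X_pow_mul_add_X_mul [Nontrivial A] {f P Q : A⟦X⟧} {n e : ℕ}
    (hf : IsUnit (constantCoeff f)) (h : f ^ n = X ^ e * P + X * Q) : e = 0 := by
  by_contra he
  have h₀ := congrArg constantCoeff h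
  rw [map_pow, map_add, map_mul, map_mul, map_pow, constantCoeff_X, zero_pow he, zero_mul,
    zero_mul, add_zero] at h₀
  exact (hf.pow n).ne_zero h₀

end PowerSeries

lemma HahnSeries.order_eq_of_coeff_ne_zero {Γ R : Type*} [Zero Γ] [LinearOrder Γ] [Zero R]
    {x : HahnSeries Γ R} {g : Γ} (hg : x.coeff g ≠ 0) (hlt : ∀ l < g, x.coeff l = 0) :
    x.order = g :=
  le_antisymm (order_le_of_coeff_ne_zero hg)
    ((le_order_iff_forall (ne_zero_of_coeff_ne_zero hg)).2 hlt)

namespace LaurentSeries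

open PowerSeries
open HahnSeries (ofPowerSeries ofPowerSeries_injective ofPowerSeries_X ofPowerSeries_X_pow
  ofPowerSeries_C)

variable {K : Type*} [Field K]

lemma ofPowerSeries_powerSeriesPart_of_order_eq {x : K⸨X⸩} {n : ℕ} (h : x.order = -n) :
    ofPowerSeries ℤ K x.powerSeriesPart = ofPowerSeries ℤ K X ^ n * x := by
  rw [ofPowerSeries_powerSeriesPart, h, neg_neg, ← map_pow, ofPowerSeries_X_pow]

lemma isUnit_constantCoeff_powerSeriesPart {x : K⸨X⸩} (hx : x ≠ 0) :
    IsUnit (constantCoeff x.powerSeriesPart) := by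
  rw [← coeff_zero_eq_constantCoeff_apply, powerSeriesPart_coeff, Nat.cast_zero, add_zero]
  exact Ne.isUnit (mt HahnSeries.coeff_order_eq_zero.1 hx)

variable {a : ℕ → ℕ} {x : ℕ → K⸨X⸩}

lemma ofPowerSeries_prod_powerSeriesPart_pow {s : Finset ℕ} (hx : ∀ j ∈ s, (x j).order = -a j)
    (c : ℕ → ℕ) :
    ofPowerSeries ℤ K (∏ j ∈ s, (x j).powerSeriesPart ^ c j) =
      ofPowerSeries ℤ K X ^ (∑ j ∈ s, a j * c j) * ∏ j ∈ s, x j ^ c j := by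
  rw [map_prod, ← prod_pow_eq_pow_sum, ← prod_mul_distrib]
  exact prod_congr rfl fun j hj => by
    rw [map_pow, ofPowerSeries_powerSeriesPart_of_order_eq (hx j hj), mul_pow, ← pow_mul]

lemma ofPowerSeries_X_pow_sub_mul_prod_powerSeriesPart_pow {s : Finset ℕ}
    (hx : ∀ j ∈ s, (x j).order = -a j) {c : ℕ → ℕ} {N : ℕ} (hc : ∑ j ∈ s, a j * c j ≤ N) :
    ofPowerSeries ℤ K (X ^ (N - ∑ j ∈ s, a j * c j) * ∏ j ∈ s, (x j).powerSeriesPart ^ c j) =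
      ofPowerSeries ℤ K X ^ N * ∏ j ∈ s, x j ^ c j := by
  rw [map_mul, map_pow, ofPowerSeries_prod_powerSeriesPart_pow hx, ← mul_assoc, ← pow_add,
    Nat.sub_add_cancel hc]

lemma powerSeriesPart_pow_eq {m i n : ℕ} (hx : ∀ j ∈ Icc 1 m, (x j).order = -a j)
    (hi : i ∈ Icc 1 m) {s : Finset ℕ} (hs : s ⊆ Icc 1 m) {ℓ : ℕ → ℕ}
    (hℓ : ∑ j ∈ s, a j * ℓ j ≤ a i * n) {T : Finset (ℕ → ℕ)} {lam : (ℕ → ℕ) → K}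
    (hT : ∀ J ∈ T, ∑ j ∈ Icc 1 m, a j * J j < a i * n)
    (h : x i ^ n = ∏ j ∈ s, x j ^ ℓ j + ∑ J ∈ T, lam J • ∏ j ∈ Icc 1 m, x j ^ J j) :
    (x i).powerSeriesPart ^ n =
      X ^ (a i * n - ∑ j ∈ s, a j * ℓ j) * ∏ j ∈ s, (x j).powerSeriesPart ^ ℓ j +
        X * ∑ J ∈ T, C (lam J) * (X ^ (a i * n - 1 - ∑ j ∈ Icc 1 m, a j * J j) *
          ∏ j ∈ Icc 1 m, (x j).powerSeriesPart ^ J j) := by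
  apply ofPowerSeries_injective (Γ := ℤ)
  rw [map_pow, ofPowerSeries_powerSeriesPart_of_order_eq (hx i hi), mul_pow, ← pow_mul, h,
    mul_add, map_add, ofPowerSeries_X_pow_sub_mul_prod_powerSeriesPart_pow
      (fun j hj => hx j (hs hj)) hℓ, mul_sum, map_mul, map_sum, mul_sum]
  congr 1
  refine sum_congr rfl fun J hJ => ?_
  have hJ' : ∑ j ∈ Icc 1 m, a j * J j ≤ a i * n - 1 := Nat.le_sub_one_of_lt (hT J hJ)
  have hpow : ofPowerSeries ℤ K X ^ (a i * n) =
      ofPowerSeries ℤ K X * ofPowerSeries ℤ K X ^ (a i * n - 1) := by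
    rw [← pow_succ', Nat.sub_add_cancel (by have := hT J hJ; omega)]
  rw [map_mul, ofPowerSeries_X_pow_sub_mul_prod_powerSeriesPart_pow hx hJ', ofPowerSeries_C,
    ← HahnSeries.C_mul_eq_smul, hpow]
  ring

lemma powerSeriesPart_prod_pow_toNat_eq {s : Finset ℕ} (hx : ∀ j ∈ s, (x j).order = -a j)
    (hx₀ : ∀ j ∈ s, x j ≠ 0) {b : ℕ → ℤ} (hb : ∑ j ∈ s, (a j : ℤ) * b j = -1)
    (h : ∏ j ∈ s, x j ^ b j = HahnSeries.single 1 1) :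
    ∏ j ∈ s, (x j).powerSeriesPart ^ (b j).toNat =
      ∏ j ∈ s, (x j).powerSeriesPart ^ (-b j).toNat := by
  apply ofPowerSeries_injective (Γ := ℤ)
  have hN : ∏ j ∈ s, x j ^ (-b j).toNat ≠ 0 :=
    prod_ne_zero_iff.2 fun j hj => pow_ne_zero _ (hx₀ j hj)
  have hPN : ∏ j ∈ s, x j ^ (b j).toNat = ofPowerSeries ℤ K X * ∏ j ∈ s, x j ^ (-b j).toNat := by
    rw [← div_eq_iff hN, ← prod_div_distrib, ofPowerSeries_X, ← h]
    exact prod_congr rfl fun j hj => by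
      rw [← zpow_natCast, ← zpow_natCast, ← zpow_sub₀ (hx₀ j hj), Int.toNat_sub_toNat_neg]
  have hw : ∑ j ∈ s, a j * (-b j).toNat = ∑ j ∈ s, a j * (b j).toNat + 1 := by
    zify
    rw [← sub_eq_iff_eq_add', ← sum_sub_distrib, ← neg_inj, ← hb, ← sum_neg_distrib]
    exact sum_congr rfl fun j _ => by
      rw [← mul_sub, ← neg_sub, Int.toNat_sub_toNat_neg, mul_neg, neg_neg]
  rw [ofPowerSeries_prod_powerSeriesPart_pow hx, ofPowerSeries_prod_powerSeriesPart_pow hx, hPN, hw,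
    pow_succ, mul_assoc]

end LaurentSeries


open PowerSeries LaurentSeries in
lemma weight_eq_and_powerSeriesPart_pow_eq {K : Type*} [Field K] {a : ℕ → ℕ} {x : ℕ → K⸨X⸩}
    {m i : ℕ} (ha : 0 < a 1) (hi : 2 ≤ i) (him : i ≤ m) (hx : ∀ j ∈ Icc 1 m, (x j).order = -a j)
    (hunit : IsUnit (constantCoeff (x i).powerSeriesPart)) {ℓ : ℕ → ℕ}
    (hℓ : dseq a i * ∑ j ∈ Icc 1 m, a j * ℓ j = a i * dseq a (i - 1))
    {T : Finset (ℕ → ℕ)} {lam : (ℕ → ℕ) → K}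
    (hT : ∀ J ∈ T, dseq a i * ∑ k ∈ Icc 1 m, a k * J k < a i * dseq a (i - 1))
    (h : x i ^ (dseq a (i - 1) / dseq a i) =
      ∏ j ∈ Icc 1 (i - 1), x j ^ ℓ j + ∑ J ∈ T, lam J • ∏ j ∈ Icc 1 m, x j ^ J j) :
    ∑ j ∈ Icc 1 (i - 1), a j * ℓ j = a i * (dseq a (i - 1) / dseq a i) ∧
      (x i).powerSeriesPart ^ (dseq a (i - 1) / dseq a i) =
        ∏ j ∈ Icc 1 (i - 1), (x j).powerSeriesPart ^ ℓ j +
          X * ∑ J ∈ T, C (lam J) * (X ^ (a i * (dseq a (i - 1) / dseq a i) - 1 -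
            ∑ j ∈ Icc 1 m, a j * J j) * ∏ j ∈ Icc 1 m, (x j).powerSeriesPart ^ J j) := by
  set n := dseq a (i - 1) / dseq a i
  have hd : 0 < dseq a i := dseq_pos ha (by omega)
  have hdn : dseq a (i - 1) = dseq a i * n := by
    refine (Nat.mul_div_cancel' ?_).symm
    simpa [Nat.sub_add_cancel (by omega : 1 ≤ i)] using dseq_succ_dvd a (i - 1)
  have hfull : ∑ j ∈ Icc 1 m, a j * ℓ j = a i * n := by
    rw [hdn, mul_left_comm] at hℓ
    exact Nat.eq_of_mul_eq_mul_left hd hℓ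
  have hle : ∑ j ∈ Icc 1 (i - 1), a j * ℓ j ≤ a i * n :=
    hfull ▸ sum_le_sum_of_subset (Icc_subset_Icc_right (by omega))
  have hT' : ∀ J ∈ T, ∑ k ∈ Icc 1 m, a k * J k < a i * n := fun J hJ => by
    have := hT J hJ
    rw [hdn, mul_left_comm] at this
    exact Nat.lt_of_mul_lt_mul_left this
  have hX := LaurentSeries.powerSeriesPart_pow_eq hx (mem_Icc.2 ⟨by omega, him⟩)
    (Icc_subset_Icc_right (by omega)) hle hT' h
  -- a positive power of `X` in front of the main term would kill the constant coefficient
  have he := eq_zero_of_pow_eq_X_pow_mul_add_X_mul hunit hX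
  rw [he, pow_zero, one_mul] at hX
  exact ⟨by omega, hX⟩

/-- Under the hypotheses on the Laurent series `x 1, …, x m` (cf. the arithmetic
local parameter setting: `x i = t^{−a i}·Σ_{k≥0} p_{i,k} t^k` with `p_{i,0} ≠ 0`,
the defining equations `F_i(x 1, …, x m) = 0` of the telescopic curve hold, and
`x 1 ^ b 1 ⋯ x m ^ b m = t` with `Σ a j * b j = −1`), every coefficient
`p_{i,k} = (x i).coeff (−a i + k)` belongs to `ℤ[λ]`, the subring of `ℂ` generated
by all the coefficients `λ^{(i)}_J` of the defining equations. -/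
theorem coeff_mem_lambda_ring (m : ℕ) (a : ℕ → ℕ) (hT : Telescopic m a)
    (ℓmat : ℕ → ℕ → ℕ)
    (hℓ : ∀ i, 2 ≤ i → i ≤ m → BAm m a (ℓmat i) ∧
      dseq a i * ∑ j ∈ Finset.Icc 1 m, a j * ℓmat i j = a i * dseq a (i - 1))
    (lam : ℕ → (ℕ → ℕ) → ℂ)
    (S : ℕ → Finset (ℕ → ℕ))
    (hS : ∀ i, 2 ≤ i → i ≤ m → ∀ J : ℕ → ℕ, J ∈ S i ↔ (BAm m a J ∧
      dseq a i * ∑ k ∈ Finset.Icc 1 m, a k * J k < a i * dseq a (i - 1)))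
    (b : ℕ → ℤ) (hb : ∑ j ∈ Finset.Icc 1 m, (a j : ℤ) * b j = -1)
    (x : ℕ → LaurentSeries ℂ)
    (hord : ∀ i, 1 ≤ i → i ≤ m → ∀ n : ℤ, n < -(a i : ℤ) → (x i).coeff n = 0)
    (hlead : ∀ i, 1 ≤ i → i ≤ m → (x i).coeff (-(a i : ℤ)) ≠ 0)
    (hF : ∀ i, 2 ≤ i → i ≤ m →
      x i ^ (dseq a (i - 1) / dseq a i) =
        ∏ j ∈ Finset.Icc 1 (i - 1), x j ^ ℓmat i j +
          ∑ J ∈ S i, lam i J • ∏ j ∈ Finset.Icc 1 m, x j ^ J j)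
    (ht : ∏ j ∈ Finset.Icc 1 m, x j ^ b j = HahnSeries.single (1 : ℤ) (1 : ℂ)) :
    ∀ i, 1 ≤ i → i ≤ m → ∀ k : ℕ, (x i).coeff (-(a i : ℤ) + k) ∈
      Subring.closure {z : ℂ | ∃ i, 2 ≤ i ∧ i ≤ m ∧ ∃ J ∈ S i, z = lam i J} := by
  obtain ⟨hm, ha, -, -⟩ := hT
  set R := Subring.closure {z : ℂ | ∃ i, 2 ≤ i ∧ i ≤ m ∧ ∃ J ∈ S i, z = lam i J}
  have ha₁ : 0 < a 1 := by have := ha 1 le_rfl (by omega); omega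
  have hlead' : ∀ j ∈ Icc 1 m, (x j).coeff (-(a j : ℤ)) ≠ 0 := fun j hj =>
    hlead j (mem_Icc.1 hj).1 (mem_Icc.1 hj).2
  have hx₀ := fun j hj => HahnSeries.ne_zero_of_coeff_ne_zero (hlead' j hj)
  have hx : ∀ j ∈ Icc 1 m, (x j).order = -a j := fun j hj =>
    HahnSeries.order_eq_of_coeff_ne_zero (hlead' j hj) (hord j (mem_Icc.1 hj).1 (mem_Icc.1 hj).2)
  have hunit := fun j hj => LaurentSeries.isUnit_constantCoeff_powerSeriesPart (hx₀ j hj)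
  have hsys := fun i (hi : 2 ≤ i) (him : i ≤ m) => weight_eq_and_powerSeriesPart_pow_eq ha₁ hi him
    hx (hunit i (mem_Icc.2 ⟨by omega, him⟩)) (hℓ i hi him).2
    (fun J hJ => ((hS i hi him J).1 hJ).2) (hF i hi him)
  have hY := PowerSeries.mem_lowCoeffSubring_of_telescopic_system R ha₁
    (fun i hi him => (hsys i hi him).1) hb hunit (fun i hi him => (hsys i hi him).2)
    (fun k hk i hi him => sum_mem fun J hJ => mul_mem
      (PowerSeries.C_mem_lowCoeffSubring (Subring.subset_closure ⟨i, hi, him, J, hJ, rfl⟩))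
      (mul_mem (pow_mem PowerSeries.X_mem_lowCoeffSubring _)
        (prod_mem fun j hj => pow_mem (hk j hj) _)))
    (LaurentSeries.powerSeriesPart_prod_pow_toNat_eq hx hx₀ hb ht)
  intro i hi him k
  have := hY (k + 1) i (mem_Icc.2 ⟨hi, him⟩) k k.lt_succ_self
  rwa [LaurentSeries.powerSeriesPart_coeff, hx i (mem_Icc.2 ⟨hi, him⟩)] at this
end
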